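/- Under the interference-limited lower-bound model, the femto-user coverage probability satisfies P_f^c(γ_f, θ_tilt, R_c) ≥ C₀ e^{-πλ_m R_c²}, where C₀ = (α_N/(α_L R_f² (C₁+C₂)^{α_N/α_L})) γ(α_N/α_L, (C₁+C₂) R_f^{2α_L/α_N}), with C₁, C₂ > 0 the closed-form interference constants; in particular the bound is strictly decreasing in R_c. -/

import Mathlib

/-! Splitting `exp (-((C₁ + C₂) ρ^β))` into the two Laplace lower bounds bounds the coverage
integral below by `∫₀^{R_f} exp (-((C₁ + C₂) ρ^β)) 2ρ/R_f² dρ`, and the substitution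
`t = (C₁ + C₂) ρ^β` identifies this integral with `C₀`. Its integrand is positive, so `C₀ > 0` and
`C₀ e^{-π λ_m R_c²}` is strictly decreasing in `R_c ≥ 0`. -/

open Real MeasureTheory

/-- Lower incomplete gamma function `γ(a, x) = ∫_0^x t^{a-1} e^{-t} dt`. -/
noncomputable def lowerIncGamma (a x : ℝ) : ℝ :=
  ∫ t in (0:ℝ)..x, t ^ (a - 1) * Real.exp (-t)

open Set

lemma mul_rpow_mem_Ioc_iff {C β R x : ℝ} (hC : 0 < C) (hβ : 0 < β) (hR : 0 ≤ R) (hx : 0 < x) :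
    C * x ^ β ∈ Ioc 0 (C * R ^ β) ↔ x ∈ Ioc 0 R := by
  simp only [mem_Ioc, hx, mul_pos hC (rpow_pos_of_pos hx β), mul_le_mul_iff_right₀ hC,
    rpow_le_rpow_iff hx.le hR hβ, true_and]

theorem setIntegral_Ioc_comp_mul_rpow {E : Type*} [NormedAddCommGroup E] [NormedSpace ℝ E]
    (f : ℝ → E) {C β R : ℝ} (hC : 0 < C) (hβ : 0 < β) (hR : 0 ≤ R) :
    ∫ t in Ioc 0 (C * R ^ β), f t = ∫ x in Ioc 0 R, (C * β * x ^ (β - 1)) • f (C * x ^ β) := by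
  set g := (Ioc 0 (C * R ^ β)).indicator f
  calc ∫ t in Ioc 0 (C * R ^ β), f t = ∫ t in Ioi 0, g t := by
        rw [setIntegral_indicator measurableSet_Ioc, inter_eq_right.mpr Ioc_subset_Ioi_self]
    _ = C • ∫ y in Ioi 0, g (C * y) := by
        rw [integral_comp_mul_left_Ioi g 0 hC, mul_zero, smul_inv_smul₀ hC.ne']
    _ = C • ∫ x in Ioi 0, (|β| * x ^ (β - 1)) • g (C * x ^ β) := by
        rw [integral_comp_rpow_Ioi (fun y => g (C * y)) hβ.ne']
    _ = C • ∫ x in Ioi 0, (Ioc 0 R).indicator (fun x => (β * x ^ (β - 1)) • f (C * x ^ β)) x := by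
        congr 1
        refine setIntegral_congr_fun measurableSet_Ioi fun x (hx : 0 < x) => ?_
        simp only [g]
        by_cases hxR : x ∈ Ioc 0 R
        · rw [indicator_of_mem hxR, indicator_of_mem ((mul_rpow_mem_Ioc_iff hC hβ hR hx).2 hxR),
            abs_of_pos hβ]
        · rw [indicator_of_notMem hxR,
            indicator_of_notMem (mt (mul_rpow_mem_Ioc_iff hC hβ hR hx).1 hxR), smul_zero]
    _ = ∫ x in Ioc 0 R, (C * β * x ^ (β - 1)) • f (C * x ^ β) := by
        rw [setIntegral_indicator measurableSet_Ioc, inter_eq_right.mpr Ioc_subset_Ioi_self,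
          ← integral_smul]
        simp only [smul_smul, mul_assoc]

theorem lowerIncGamma_eq_integral_rpow_mul_exp {a C β R : ℝ} (hC : 0 < C) (hβ : 0 < β)
    (hR : 0 ≤ R) :
    lowerIncGamma a (C * R ^ β) =
      β * C ^ a * ∫ x in (0:ℝ)..R, x ^ (a * β - 1) * exp (-(C * x ^ β)) := by
  rw [lowerIncGamma, intervalIntegral.integral_of_le (by positivity),
    intervalIntegral.integral_of_le hR, setIntegral_Ioc_comp_mul_rpow _ hC hβ hR,
    ← integral_const_mul]
  refine setIntegral_congr_fun measurableSet_Ioc fun x hx => ?_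
  have hx₀ : 0 < x := hx.1
  have hpow : (C * x ^ β) ^ (a - 1) * x ^ (β - 1) = C ^ (a - 1) * x ^ (a * β - 1) := by
    rw [mul_rpow hC.le (rpow_nonneg hx₀.le β), ← rpow_mul hx₀.le, mul_assoc, ← rpow_add hx₀]
    ring_nf
  have hC' : C * C ^ (a - 1) = C ^ a := by
    rw [rpow_sub hC, rpow_one, mul_div_cancel₀ _ hC.ne']
  simp only [smul_eq_mul]
  linear_combination (C * β * exp (-(C * x ^ β))) * hpow
    + (β * exp (-(C * x ^ β)) * x ^ (a * β - 1)) * hC'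

theorem integral_exp_neg_mul_rpow_mul_two_mul_div_sq {C a R : ℝ} (hC : 0 < C) (ha : 0 < a)
    (hR : 0 < R) :
    ∫ ρ in (0:ℝ)..R, exp (-(C * ρ ^ (2 / a))) * (2 * ρ / R ^ 2) =
      a / (R ^ 2 * C ^ a) * lowerIncGamma a (C * R ^ (2 / a)) := by
  have hexp : a * (2 / a) - 1 = 1 := by field_simp; norm_num
  rw [lowerIncGamma_eq_integral_rpow_mul_exp hC (by positivity) hR.le, hexp]
  have hweight : ∀ ρ : ℝ, exp (-(C * ρ ^ (2 / a))) * (2 * ρ / R ^ 2) =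
      2 / R ^ 2 * (ρ ^ (1:ℝ) * exp (-(C * ρ ^ (2 / a)))) := fun ρ => by rw [rpow_one]; ring
  simp_rw [hweight, intervalIntegral.integral_const_mul]
  have : C ^ a ≠ 0 := (rpow_pos_of_pos hC a).ne'
  field_simp

lemma exp_neg_add_mul_le_mul {C₁ C₂ t l₁ l₂ : ℝ} (h₁ : exp (-(C₁ * t)) ≤ l₁)
    (h₂ : exp (-(C₂ * t)) ≤ l₂) : exp (-((C₁ + C₂) * t)) ≤ l₁ * l₂ := by
  rw [add_mul, neg_add, exp_add]
  exact mul_le_mul h₁ h₂ (exp_pos _).le ((exp_pos _).le.trans h₁)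

lemma strictAntiOn_mul_exp_neg_mul_sq {c k : ℝ} (hc : 0 < c) (hk : 0 < k) :
    StrictAntiOn (fun r => c * exp (-(k * r ^ 2))) (Ici 0) := by
  intro x (hx : 0 ≤ x) y _ hxy
  dsimp only
  gcongr

/-- Femto-user coverage lower bound `P_f^c ≥ C₀ e^{-π λ_m R_c²}` in the
interference-limited regime, and the bound is strictly decreasing in `R_c`. -/
theorem stmt_12 (lam_m C₁ C₂ R_f αL αN : ℝ)
    (hlam : 0 < lam_m) (h1 : 0 < C₁) (h2 : 0 < C₂) (hRf : 0 < R_f)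
    (hαL : 0 < αL) (hαN : 0 < αN)
    (L₁ L₂ : ℝ → ℝ)
    (hL₁ : ∀ ρ ∈ Set.Icc 0 R_f, Real.exp (-(C₁ * ρ ^ (2 * αL / αN))) ≤ L₁ ρ)
    (hL₂ : ∀ ρ ∈ Set.Icc 0 R_f, Real.exp (-(C₂ * ρ ^ (2 * αL / αN))) ≤ L₂ ρ)
    (hint : IntervalIntegrable (fun ρ => L₁ ρ * L₂ ρ * (2 * ρ / R_f ^ 2))
      volume 0 R_f)
    (Pc : ℝ → ℝ)
    (hPc : ∀ R_c, Pc R_c = Real.exp (-(π * lam_m * R_c ^ 2)) *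
      ∫ ρ in (0:ℝ)..R_f, L₁ ρ * L₂ ρ * (2 * ρ / R_f ^ 2))
    (C₀ : ℝ)
    (hC₀ : C₀ = (αN / (αL * R_f ^ 2 * (C₁ + C₂) ^ (αN / αL))) *
      lowerIncGamma (αN / αL) ((C₁ + C₂) * R_f ^ (2 * αL / αN))) :
    (∀ R_c, 0 ≤ R_c → C₀ * Real.exp (-(π * lam_m * R_c ^ 2)) ≤ Pc R_c) ∧
      StrictAntiOn (fun R_c => C₀ * Real.exp (-(π * lam_m * R_c ^ 2))) (Set.Ici 0) := by
  have hβ : 2 * αL / αN = 2 / (αN / αL) := (div_div_eq_mul_div 2 αN αL).symm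
  have hC₀_eq : C₀ = ∫ ρ in (0:ℝ)..R_f,
      exp (-((C₁ + C₂) * ρ ^ (2 * αL / αN))) * (2 * ρ / R_f ^ 2) := by
    rw [hC₀, hβ, integral_exp_neg_mul_rpow_mul_two_mul_div_sq (by positivity) (by positivity) hRf,
      div_div, mul_assoc]
  have hf : Continuous fun ρ : ℝ =>
      exp (-((C₁ + C₂) * ρ ^ (2 * αL / αN))) * (2 * ρ / R_f ^ 2) := by
    have : Continuous fun ρ : ℝ => ρ ^ (2 * αL / αN) := continuous_rpow_const (by positivity)
    fun_prop
  have hC₀_pos : 0 < C₀ := hC₀_eq ▸ intervalIntegral.intervalIntegral_pos_of_pos_on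
    (hf.intervalIntegrable _ _) (fun ρ hρ => by have := hρ.1; positivity) hRf
  have hC₀_le : C₀ ≤ ∫ ρ in (0:ℝ)..R_f, L₁ ρ * L₂ ρ * (2 * ρ / R_f ^ 2) :=
    hC₀_eq ▸ intervalIntegral.integral_mono_on hRf.le (hf.intervalIntegrable _ _) hint
      fun ρ hρ => mul_le_mul_of_nonneg_right (exp_neg_add_mul_le_mul (hL₁ ρ hρ) (hL₂ ρ hρ))
        (by have := hρ.1; positivity)
  refine ⟨fun R_c _ => ?_, strictAntiOn_mul_exp_neg_mul_sq hC₀_pos (by positivity)⟩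
  rw [hPc, mul_comm]
  gcongr
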